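/- Barbalat's lemma: if g : ℝ → ℝ is uniformly continuous on [0, ∞) and the limit lim_{t→∞} ∫_0^t g(τ) dτ exists and is finite, then g(t) → 0 as t → ∞. -/

import Mathlib

/-!
Averaging `g` over a window `[t, t + δ]` of fixed length: uniform continuity makes the average
`δ⁻¹ ∫_t^{t+δ} g` uniformly close to `g t`, while `∫_t^{t+δ} g`, a difference of two values of the
convergent `∫_a^· g`, tends to `0`. Hence `g t` is eventually small.
-/

open Filter Set Topology MeasureTheory

variable {E : Type*} [NormedAddCommGroup E] [NormedSpace ℝ E]

theorem tendsto_intervalIntegral_add_const_of_tendsto {g : ℝ → E} {a : ℝ} {L : E}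
    (hg : ContinuousOn g (Ici a)) (hL : Tendsto (fun t => ∫ τ in a..t, g τ) atTop (𝓝 L))
    {c : ℝ} (hc : 0 ≤ c) : Tendsto (fun t => ∫ τ in t..t + c, g τ) atTop (𝓝 0) := by
  have hint : ∀ b, a ≤ b → IntervalIntegrable g volume a b := fun b hab =>
    ContinuousOn.intervalIntegrable_of_Icc hab (hg.mono Icc_subset_Ici_self)
  have hshift : Tendsto (fun t => ∫ τ in a..t + c, g τ) atTop (𝓝 L) :=
    hL.comp (tendsto_atTop_add_const_right _ c tendsto_id)
  refine (sub_self L ▸ hshift.sub hL).congr' ?_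
  filter_upwards [eventually_ge_atTop a] with t ht
  exact intervalIntegral.integral_interval_sub_left (hint _ (by linarith)) (hint t ht)

theorem norm_smul_sub_intervalIntegral_le [CompleteSpace E] {g : ℝ → E} {t c η : ℝ}
    (hc : 0 ≤ c) (hg : IntervalIntegrable g volume t (t + c))
    (hη : ∀ τ ∈ Icc t (t + c), ‖g τ - g t‖ ≤ η) :
    ‖c • g t - ∫ τ in t..t + c, g τ‖ ≤ η * c := by
  have hsub : c • g t - ∫ τ in t..t + c, g τ = ∫ τ in t..t + c, (g t - g τ) := by
    rw [intervalIntegral.integral_sub intervalIntegrable_const hg,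
      intervalIntegral.integral_const, add_sub_cancel_left]
  calc ‖c • g t - ∫ τ in t..t + c, g τ‖
      ≤ η * |t + c - t| := by
        rw [hsub]
        refine intervalIntegral.norm_integral_le_of_norm_le_const fun τ hτ => ?_
        rw [norm_sub_rev]
        exact hη τ (Ioc_subset_Icc_self (by rwa [uIoc_of_le (by linarith)] at hτ))
    _ = η * c := by rw [add_sub_cancel_left, abs_of_nonneg hc]

theorem tendsto_zero_of_uniformContinuousOn_of_tendsto_intervalIntegral [CompleteSpace E]
    {g : ℝ → E} {a : ℝ} {L : E} (hu : UniformContinuousOn g (Ici a))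
    (hL : Tendsto (fun t => ∫ τ in a..t, g τ) atTop (𝓝 L)) : Tendsto g atTop (𝓝 0) := by
  refine Metric.tendsto_nhds.mpr fun ε hε => ?_
  obtain ⟨δ, hδ, hclose⟩ := Metric.uniformContinuousOn_iff_le.mp hu (ε / 2) (by positivity)
  have hwindow := Metric.tendsto_nhds.mp
    (tendsto_intervalIntegral_add_const_of_tendsto hu.continuousOn hL hδ.le) (ε / 2 * δ)
    (by positivity)
  filter_upwards [eventually_ge_atTop a, hwindow] with t ht hsmall
  rw [dist_zero_right] at hsmall ⊢
  have havg : ‖δ • g t - ∫ τ in t..t + δ, g τ‖ ≤ ε / 2 * δ := by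
    refine norm_smul_sub_intervalIntegral_le hδ.le ?_ fun τ hτ => ?_
    · exact ContinuousOn.intervalIntegrable_of_Icc (by linarith)
        (hu.continuousOn.mono fun τ hτ => le_trans ht hτ.1)
    · rw [← dist_eq_norm]
      refine hclose τ (le_trans ht hτ.1) t ht ?_
      rw [Real.dist_eq, abs_of_nonneg (by linarith [hτ.1])]
      linarith [hτ.2]
  have : δ * ‖g t‖ < δ * ε :=
    calc δ * ‖g t‖ = ‖δ • g t‖ := by rw [norm_smul, Real.norm_of_nonneg hδ.le]
      _ ≤ ‖δ • g t - ∫ τ in t..t + δ, g τ‖ + ‖∫ τ in t..t + δ, g τ‖ := norm_le_norm_sub_add _ _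
      _ < ε / 2 * δ + ε / 2 * δ := add_lt_add_of_le_of_lt havg hsmall
      _ = δ * ε := by ring
  exact lt_of_mul_lt_mul_left this hδ.le

/-- Barbalat's lemma. -/
theorem stmt_2 (g : ℝ → ℝ) (hu : UniformContinuousOn g (Set.Ici 0))
    (L : ℝ)
    (hL : Filter.Tendsto (fun t => ∫ τ in (0:ℝ)..t, g τ) Filter.atTop (nhds L)) :
    Filter.Tendsto g Filter.atTop (nhds 0) :=
  tendsto_zero_of_uniformContinuousOn_of_tendsto_intervalIntegral hu hL
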